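/- arXiv:2503.19422 — 3 statements merged into one kernel-verified Lean document; each statement's English description precedes it below -/
import Mathlib

section
/- For n ≥ 3, the product of 4 sin²(jπ/n) over all j with 0 < j < n/2 and gcd(j, n) = 1 equals p if n is a power of a prime p, and equals 1 otherwise. -/
open Real Polynomial Finset

theorem prod_four_sin_sq (n : ℕ) (hn : 3 ≤ n) :
    (∀ p k : ℕ, p.Prime → 0 < k → n = p ^ k →
      (∏ j ∈ (Finset.range n).filter (fun j => 0 < j ∧ 2 * j < n ∧ Nat.Coprime j n),
        4 * Real.sin (j * π / n) ^ 2) = (p : ℝ)) ∧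
    (¬ IsPrimePow n →
      (∏ j ∈ (Finset.range n).filter (fun j => 0 < j ∧ 2 * j < n ∧ Nat.Coprime j n),
        4 * Real.sin (j * π / n) ^ 2) = 1) := by
  have hn0 : n ≠ 0 := by omega
  have hnpos : 0 < n := by omega
  have hnC : (n : ℂ) ≠ 0 := by exact_mod_cast hn0
  have hnR : (n : ℝ) ≠ 0 := by exact_mod_cast hn0
  set ζ : ℂ := Complex.exp (2 * π * Complex.I / n) with hζdef
  have hζ : IsPrimitiveRoot ζ n := Complex.isPrimitiveRoot_exp n hn0
  set H : Finset ℕ := (Finset.range n).filter (fun j => 0 < j ∧ 2 * j < n ∧ Nat.Coprime j n) with hH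
  set T : Finset ℕ := (Finset.range n).filter (fun j => 0 < j ∧ Nat.Coprime j n) with hT
  -- step 1 : product over T equals cyclotomic eval
  have step1 : (∏ j ∈ T, (1 - ζ ^ j)) = eval 1 (cyclotomic n ℂ) := by
    rw [cyclotomic_eq_prod_X_sub_primitiveRoots hζ, eval_prod]
    simp only [eval_sub, eval_X, eval_C]
    refine Finset.prod_nbij (fun j => ζ ^ j) ?_ ?_ ?_ ?_
    · intro j hj
      simp only [hT, mem_filter, mem_range, Finset.coe_filter, Set.mem_setOf_eq] at hj
      exact (mem_primitiveRoots hnpos).mpr ((hζ.pow_iff_coprime hnpos j).mpr hj.2.2)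
    · intro a ha b hb hab
      simp only [hT, Finset.mem_coe, mem_filter, mem_range] at ha hb
      exact hζ.pow_inj ha.1 hb.1 hab
    · intro μ hμ
      simp only [Finset.mem_coe, mem_primitiveRoots hnpos] at hμ
      have : NeZero n := ⟨hn0⟩
      obtain ⟨i, hi, rfl⟩ := hζ.eq_pow_of_pow_eq_one hμ.pow_eq_one
      refine ⟨i, ?_, rfl⟩
      simp only [hT, Finset.mem_coe, mem_filter, mem_range]
      refine ⟨hi, ?_, (hζ.pow_iff_coprime hnpos i).mp hμ⟩
      rcases Nat.eq_zero_or_pos i with rfl | h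
      · exfalso
        simp only [pow_zero] at hμ
        have := hμ.dvd_of_pow_eq_one 1 (one_pow 1)
        exact absurd (Nat.le_of_dvd one_pos this) (by omega)
      · exact h
    · intro j hj; rfl
  -- step 2: split T into H and its mirror
  have hTsplit : T = H ∪ H.image (fun j => n - j) := by
    ext j
    simp only [hT, hH, mem_union, mem_image, mem_filter, mem_range]
    constructor
    · rintro ⟨hjn, hj0, hcop⟩
      rcases lt_trichotomy (2 * j) n with h | h | h
      · exact Or.inl ⟨hjn, hj0, h, hcop⟩
      · exfalso
        have hdvd : j ∣ n := ⟨2, by omega⟩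
        have := Nat.gcd_eq_left hdvd
        have : j = 1 := by rw [← hcop]; omega
        omega
      · refine Or.inr ⟨n - j, ⟨by omega, by omega, by omega, ?_⟩, by omega⟩
        rw [Nat.coprime_self_sub_left (by omega)]
        exact hcop
    · rintro (⟨hjn, hj0, h2, hcop⟩ | ⟨i, ⟨hin, hi0, h2, hcop⟩, rfl⟩)
      · exact ⟨hjn, hj0, hcop⟩
      · refine ⟨by omega, by omega, ?_⟩
        rw [Nat.coprime_self_sub_left (by omega)]
        exact hcop
  have hdisj : Disjoint H (H.image (fun j => n - j)) := by
    rw [Finset.disjoint_left]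
    intro a ha ha'
    simp only [hH, mem_image, mem_filter, mem_range] at ha ha'
    obtain ⟨i, hi, rfl⟩ := ha'
    omega
  have hinj : Set.InjOn (fun j => n - j) H := by
    intro a ha b hb hab
    simp only [hH, Finset.mem_coe, mem_filter, mem_range] at ha hb
    simp only at hab
    omega
  -- step 3 : the paired factor
  have hpair : ∀ j ∈ H, (1 - ζ ^ j) * (1 - ζ ^ (n - j)) =
      ((4 * Real.sin (j * π / n) ^ 2 : ℝ) : ℂ) := by
    intro j hj
    simp only [hH, mem_filter, mem_range] at hj
    have hjn : j ≤ n := hj.1.le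
    have e1 : ζ ^ j = Complex.exp ((2 * π * j / n : ℝ) * Complex.I) := by
      rw [hζdef, ← Complex.exp_nat_mul]
      congr 1
      push_cast
      field_simp
    have e2 : ζ ^ (n - j) = Complex.exp (-((2 * π * j / n : ℝ)) * Complex.I) := by
      rw [hζdef, ← Complex.exp_nat_mul]
      rw [show (((n - j : ℕ) : ℂ)) = (n : ℂ) - j by push_cast [hjn]; ring]
      rw [show ((n : ℂ) - j) * (2 * π * Complex.I / n) =
          2 * π * Complex.I + (-((2 * π * j / n : ℝ)) * Complex.I) by push_cast; field_simp; ring]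
      rw [Complex.exp_add, Complex.exp_two_pi_mul_I, one_mul]
    rw [e1, e2, Complex.exp_mul_I, Complex.exp_mul_I]
    rw [Complex.cos_neg, Complex.sin_neg]
    rw [← Complex.ofReal_cos, ← Complex.ofReal_sin]
    have h4 : 4 * Real.sin (j * π / n) ^ 2 = 2 - 2 * Real.cos (2 * π * j / n) := by
      have h2x : 2 * π * j / n = 2 * (j * π / n) := by ring
      rw [h2x, Real.cos_two_mul]
      nlinarith [Real.sin_sq_add_cos_sq (j * π / n)]
    rw [h4, Complex.ofReal_sub, Complex.ofReal_mul]
    simp only [Complex.ofReal_ofNat]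
    have hsc : (Real.sin (2 * π * j / n) : ℂ) ^ 2 + (Real.cos (2 * π * j / n) : ℂ) ^ 2 = 1 := by
      exact_mod_cast Real.sin_sq_add_cos_sq (2 * π * j / n)
    linear_combination (-((Real.sin (2 * π * j / n) : ℂ)) ^ 2) * Complex.I_sq + hsc
  -- combine
  have key : ((∏ j ∈ H, (4 * Real.sin (j * π / n) ^ 2) : ℝ) : ℂ) = eval 1 (cyclotomic n ℂ) := by
    rw [← step1, hTsplit, Finset.prod_union hdisj, Finset.prod_image hinj, ← Finset.prod_mul_distrib]
    rw [Complex.ofReal_prod]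
    exact Finset.prod_congr rfl fun j hj => (hpair j hj).symm
  have keyR : (∏ j ∈ H, (4 * Real.sin (j * π / n) ^ 2)) = eval 1 (cyclotomic n ℝ) := by
    apply Complex.ofReal_injective
    rw [key, ← map_cyclotomic n (algebraMap ℝ ℂ), eval_one_map]
    rfl
  constructor
  · rintro p k hp hk rfl
    haveI : Fact p.Prime := ⟨hp⟩
    rw [keyR]
    obtain ⟨k', rfl⟩ : ∃ k', k = k' + 1 := ⟨k - 1, by omega⟩
    exact eval_one_cyclotomic_prime_pow k'
  · intro hnpp
    rw [keyR]
    apply eval_one_cyclotomic_not_prime_pow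
    intro p hp k hpk
    rcases Nat.eq_zero_or_pos k with rfl | hk
    · simp at hpk; omega
    · exact hnpp ⟨p, k, hp.prime, hk, hpk⟩
end

section
/- For n > 1, the product of 2 sin(kπ/n) over all k with 0 < k < n and gcd(k, n) = 1 equals p if n is a power of a prime p, and equals 1 otherwise. -/
/-!
With `ζ = exp (2πi/n)`, each factor is `2 sin (kπ/n) = ‖1 - ζ ^ k‖`, and the `ζ ^ k` with `k`
coprime to `n` are exactly the primitive `n`-th roots of unity. So the product is `|Φₙ(1)|`, which
is `p` when `n` is a power of the prime `p` and `1` when `n > 1` is not a prime power.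
-/

open Real Polynomial Finset

theorem IsPrimitiveRoot.prod_primitiveRoots {R M : Type*} [CommRing R] [IsDomain R]
    [CommMonoid M] {ζ : R} {n : ℕ} (hζ : IsPrimitiveRoot ζ n) (hn : n ≠ 0) (f : R → M) :
    ∏ μ ∈ primitiveRoots n R, f μ = ∏ k ∈ (range n).filter n.Coprime, f (ζ ^ k) := by
  have hn₀ : 0 < n := Nat.pos_of_ne_zero hn
  have : NeZero n := ⟨hn⟩
  symm
  refine prod_bij (fun k _ ↦ ζ ^ k) ?_ ?_ ?_ fun _ _ ↦ rfl
  · simp only [mem_filter, mem_range, and_imp]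
    intro k _ hk
    exact (mem_primitiveRoots hn₀).2 (hζ.pow_of_coprime k hk.symm)
  · simp only [mem_filter, mem_range, and_imp]
    intro i hi _ j hj _ hij
    exact hζ.pow_inj hi hj hij
  · intro μ hμ
    obtain ⟨k, hkn, hk, rfl⟩ := hζ.isPrimitiveRoot_iff.1 ((mem_primitiveRoots hn₀).1 hμ)
    exact ⟨k, mem_filter.2 ⟨mem_range.2 hkn, hk.symm⟩, rfl⟩

theorem IsPrimitiveRoot.eval_one_cyclotomic {K : Type*} [CommRing K] [IsDomain K] {ζ : K}
    {n : ℕ} (hζ : IsPrimitiveRoot ζ n) (hn : n ≠ 0) :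
    (cyclotomic n K).eval 1 = ∏ k ∈ (range n).filter n.Coprime, (1 - ζ ^ k) := by
  rw [cyclotomic_eq_prod_X_sub_primitiveRoots hζ, eval_prod, hζ.prod_primitiveRoots hn]
  simp only [eval_sub, eval_X, eval_C]

theorem Nat.filter_range_pos_and_coprime {n : ℕ} (hn : n ≠ 1) :
    (range n).filter (fun k ↦ 0 < k ∧ k.Coprime n) = (range n).filter n.Coprime := by
  refine filter_congr fun k _ ↦ ⟨fun hk ↦ hk.2.symm, fun hk ↦ ⟨?_, hk.symm⟩⟩
  refine Nat.pos_of_ne_zero fun hk₀ ↦ hn ?_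
  rwa [hk₀, Nat.coprime_zero_right] at hk

theorem Real.sin_natCast_mul_pi_div_pos {k n : ℕ} (hk : 0 < k) (hkn : k < n) :
    0 < sin (k * π / n) := by
  have hn : (0 : ℝ) < n := by exact_mod_cast hk.trans hkn
  refine sin_pos_of_pos_of_lt_pi (by positivity) ?_
  rw [div_lt_iff₀ hn, mul_comm]
  exact mul_lt_mul_of_pos_left (by exact_mod_cast hkn) pi_pos

theorem Complex.norm_one_sub_exp_two_pi_I_div_pow (k n : ℕ) :
    ‖1 - exp (2 * π * I / n) ^ k‖ = |2 * Real.sin (k * π / n)| := by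
  have hx : exp (2 * π * I / n) ^ k = exp (I * ↑(2 * π * k / n)) := by
    rw [← exp_nat_mul]
    push_cast
    ring_nf
  rw [hx, norm_sub_rev, norm_exp_I_mul_ofReal_sub_one, Real.norm_eq_abs]
  ring_nf

theorem prod_two_sin_eq_abs_eval_one_cyclotomic {n : ℕ} (hn : 1 < n) :
    ∏ k ∈ (range n).filter (fun k ↦ 0 < k ∧ k.Coprime n), 2 * sin (k * π / n) =
      |(cyclotomic n ℝ).eval 1| := by
  have hζ := Complex.isPrimitiveRoot_exp n (by omega)
  calc ∏ k ∈ (range n).filter (fun k ↦ 0 < k ∧ k.Coprime n), 2 * sin (k * π / n)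
      = ∏ k ∈ (range n).filter n.Coprime, |2 * sin (k * π / n)| := by
        rw [← Nat.filter_range_pos_and_coprime hn.ne']
        refine prod_congr rfl fun k hk ↦ ?_
        obtain ⟨hkn, hk₀, -⟩ := mem_filter.1 hk
        have hsin := sin_natCast_mul_pi_div_pos hk₀ (mem_range.1 hkn)
        exact (abs_of_pos (mul_pos two_pos hsin)).symm
    _ = ‖(cyclotomic n ℂ).eval 1‖ := by
        simp only [hζ.eval_one_cyclotomic (by omega), norm_prod,
          Complex.norm_one_sub_exp_two_pi_I_div_pow]
    _ = |(cyclotomic n ℝ).eval 1| := by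
        rw [← Complex.ofReal_one, cyclotomic.eval_apply_ofReal, Complex.norm_real,
          Real.norm_eq_abs]

theorem prod_two_sin (n : ℕ) (hn : 1 < n) :
    (∀ p k : ℕ, p.Prime → 0 < k → n = p ^ k →
      (∏ k' ∈ (Finset.range n).filter (fun k' => 0 < k' ∧ Nat.Coprime k' n),
        2 * Real.sin (k' * π / n)) = p) ∧
    (¬ IsPrimePow n →
      (∏ k' ∈ (Finset.range n).filter (fun k' => 0 < k' ∧ Nat.Coprime k' n),
        2 * Real.sin (k' * π / n)) = 1) := by
  rw [prod_two_sin_eq_abs_eval_one_cyclotomic hn]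
  refine ⟨?_, fun hn' ↦ ?_⟩
  · rintro p (_ | k) hp hk rfl
    · exact absurd hk (lt_irrefl 0)
    have := Fact.mk hp
    rw [eval_one_cyclotomic_prime_pow, Nat.abs_cast]
  · rw [eval_one_cyclotomic_not_prime_pow, abs_one]
    rintro p hp (_ | k) rfl
    · exact hn.ne' (pow_zero p)
    · exact hn' ((isPrimePow_nat_iff _).2 ⟨p, k + 1, hp, k.succ_pos, rfl⟩)
end

section
/- For n ≥ 3, let ω = e^{2πi/3} and w(n) = Φ_n(ω)/ω^{φ(n)/2}, where Φ_n is the n-th cyclotomic polynomial. Then w(3m) for m ≥ 3 equals v(m) if v(m) ≡ 1 (mod 3) or v(m) = 3, and −v(m) if v(m) ≡ 2 (mod 3). -/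
/-!
If `3 ∣ m`, then `Φ_{3m}(X) = Φ_m(X³)`, so `Φ_{3m}(ω) = Φ_m(1) = v(m)`, while `ω^{φ(3m)/2} = 1`
because `φ(3m)/2 = 3 · φ(m)/2`.

If `3 ∤ m`, then `Φ_m(X³) = Φ_{3m}(X) Φ_m(X)` gives `Φ_{3m}(ω) Φ_m(ω) = v(m)`, and `φ(3m)/2 = φ(m)`,
so everything hinges on `u = ω^{φ(m)} Φ_m(ω)`. As `ζ ↦ ζ³` permutes the primitive `m`-th roots,
`Φ_m(1) Φ_m(ω) Φ_m(ω²) = ∏ (1 - ζ³) = Φ_m(1)`, and the symmetry `x^{φ(m)} Φ_m(1/x) = Φ_m(x)` turns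
this into `u² = 1`. Finally `u = ±1` is the value at `ω` of the integer polynomial `X^{φ(m)} Φ_m`,
so `Φ_3` divides `X^{φ(m)} Φ_m ∓ 1`; evaluating at `1` gives `v(m) ≡ u (mod 3)`.
-/

open Polynomial Complex

/-- `v n = p` if `n = p ^ k` for a prime `p` and `k ≥ 1`, and `v n = 1` otherwise. -/
def v (n : ℕ) : ℕ := if IsPrimePow n then n.minFac else 1

theorem v_dvd (n : ℕ) : v n ∣ n := by
  unfold v
  split_ifs
  · exact n.minFac_dvd
  · exact one_dvd n

theorem v_eq_one_or_eq_of_dvd {p n : ℕ} (hp : p.Prime) (hpn : p ∣ n) : v n = 1 ∨ v n = p := by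
  unfold v
  split_ifs with hn
  · obtain ⟨q, k, hq, hk, rfl⟩ := hn
    rw [← Nat.prime_iff] at hq
    rw [hq.pow_minFac hk.ne', (Nat.prime_dvd_prime_iff_eq hp hq).mp (hp.dvd_of_dvd_pow hpn)]
    exact Or.inr rfl
  · exact Or.inl rfl

theorem eval_one_cyclotomic_eq_v {R : Type*} [CommRing R] {n : ℕ} (hn : 2 ≤ n) :
    (cyclotomic n R).eval 1 = v n := by
  by_cases hpp : IsPrimePow n
  · obtain ⟨p, k, hp, hk, rfl⟩ := hpp
    rw [← Nat.prime_iff] at hp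
    have : Fact p.Prime := ⟨hp⟩
    obtain ⟨k, rfl⟩ := Nat.exists_eq_add_one_of_ne_zero hk.ne'
    rw [eval_one_cyclotomic_prime_pow, v, if_pos (hp.isPrimePow.pow k.succ_ne_zero),
      hp.pow_minFac k.succ_ne_zero]
  · rw [eval_one_cyclotomic_not_prime_pow, v, if_neg hpp, Nat.cast_one]
    rintro p hp k rfl
    exact hpp ⟨p, k, hp.prime, Nat.pos_of_ne_zero (by rintro rfl; simp at hn), rfl⟩

section PrimitiveRoots

variable {K : Type*} [Field K] {m : ℕ} {μ : K}

theorem prod_primitiveRoots_comp_pow {M : Type*} [CommMonoid M] [NeZero m] {a : ℕ}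
    (ha : a.Coprime m) (f : K → M) :
    ∏ ζ ∈ primitiveRoots m K, f (ζ ^ a) = ∏ ζ ∈ primitiveRoots m K, f ζ := by
  rw [← Finset.prod_coe_sort, ← Finset.prod_coe_sort (primitiveRoots m K) f]
  exact (IsPrimitiveRoot.primitiveRootsPowEquivOfCoprime (R := K) ha).prod_comp (fun ζ => f ↑ζ)

theorem prod_primitiveRoots_comp_inv {M : Type*} [CommMonoid M] (f : K → M) :
    ∏ ζ ∈ primitiveRoots m K, f ζ⁻¹ = ∏ ζ ∈ primitiveRoots m K, f ζ := by
  refine Finset.prod_nbij' (·⁻¹) (·⁻¹) (fun ζ hζ => ?_) (fun ζ hζ => ?_)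
    (fun ζ _ => inv_inv ζ) (fun ζ _ => inv_inv ζ) (fun _ _ => rfl) <;>
  · have hm : 0 < m := Nat.pos_of_ne_zero (by rintro rfl; simp at hζ)
    exact (mem_primitiveRoots hm).mpr ((mem_primitiveRoots hm).mp hζ).inv

theorem eval_cyclotomic_eq_prod (hμ : IsPrimitiveRoot μ m) (x : K) :
    (cyclotomic m K).eval x = ∏ ζ ∈ primitiveRoots m K, (x - ζ) := by
  simp [cyclotomic_eq_prod_X_sub_primitiveRoots hμ, eval_prod]

theorem prod_primitiveRoots_neg (hμ : IsPrimitiveRoot μ m) (hm : 2 ≤ m) :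
    ∏ ζ ∈ primitiveRoots m K, -ζ = 1 := by
  have h := cyclotomic_coeff_zero K (by omega : 1 < m)
  rwa [coeff_zero_eq_eval_zero, eval_cyclotomic_eq_prod hμ, Finset.prod_congr rfl
    fun ζ _ => zero_sub ζ] at h

theorem pow_totient_mul_eval_cyclotomic_inv (hμ : IsPrimitiveRoot μ m) (hm : 2 ≤ m) {x : K}
    (hx : x ≠ 0) : x ^ m.totient * (cyclotomic m K).eval x⁻¹ = (cyclotomic m K).eval x := by
  have hm0 : 0 < m := by omega
  calc x ^ m.totient * (cyclotomic m K).eval x⁻¹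
      = ∏ ζ ∈ primitiveRoots m K, (-ζ) * (x - ζ⁻¹) := by
        rw [eval_cyclotomic_eq_prod hμ, ← hμ.card_primitiveRoots, ← Finset.prod_const,
          ← Finset.prod_mul_distrib]
        refine Finset.prod_congr rfl fun ζ hζ => ?_
        have hζ0 : ζ ≠ 0 := ((mem_primitiveRoots hm0).mp hζ).ne_zero hm0.ne'
        field_simp
        ring
    _ = (cyclotomic m K).eval x := by
        rw [Finset.prod_mul_distrib, prod_primitiveRoots_neg hμ hm, one_mul,
          prod_primitiveRoots_comp_inv (fun ζ => x - ζ), eval_cyclotomic_eq_prod hμ]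

end PrimitiveRoots

section CubeRoot

variable {K : Type*} [Field K] {m : ℕ} {ω μ : K}

theorem eval_cyclotomic_mul_eval_cyclotomic_sq [CharZero K] (hω : IsPrimitiveRoot ω 3)
    (hμ : IsPrimitiveRoot μ m) (hm : 2 ≤ m) (h3 : ¬ 3 ∣ m) :
    (cyclotomic m K).eval ω * (cyclotomic m K).eval (ω ^ 2) = 1 := by
  have : NeZero m := ⟨by omega⟩
  have hsum : ω ^ 2 + ω + 1 = 0 := by
    have h := hω.geom_sum_eq_zero (by norm_num)
    simp only [Finset.sum_range_succ, Finset.sum_range_zero] at h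
    linear_combination h
  have h1 : (cyclotomic m K).eval 1 ≠ 0 := by
    rw [eval_one_cyclotomic_eq_v hm, Nat.cast_ne_zero]
    exact (Nat.pos_of_dvd_of_pos (v_dvd m) (by omega)).ne'
  refine mul_left_cancel₀ h1 ?_
  calc (cyclotomic m K).eval 1 * ((cyclotomic m K).eval ω * (cyclotomic m K).eval (ω ^ 2))
      = ∏ ζ ∈ primitiveRoots m K, (1 - ζ ^ 3) := by
        simp only [eval_cyclotomic_eq_prod hμ, ← Finset.prod_mul_distrib]
        refine Finset.prod_congr rfl fun ζ _ => ?_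
        linear_combination (1 - ζ) * hω.pow_eq_one - ζ * (1 - ζ) * hsum
    _ = (cyclotomic m K).eval 1 * 1 := by
        have hcop : Nat.Coprime 3 m := (Nat.Prime.coprime_iff_not_dvd Nat.prime_three).mpr h3
        rw [mul_one, prod_primitiveRoots_comp_pow hcop (fun ζ => 1 - ζ),
          eval_cyclotomic_eq_prod hμ]

theorem pow_totient_mul_eval_cyclotomic_sq_eq_one [CharZero K] (hω : IsPrimitiveRoot ω 3)
    (hμ : IsPrimitiveRoot μ m) (hm : 2 ≤ m) (h3 : ¬ 3 ∣ m) :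
    (ω ^ m.totient * (cyclotomic m K).eval ω) ^ 2 = 1 := by
  have hinv : ω⁻¹ = ω ^ 2 := inv_eq_of_mul_eq_one_right (by rw [← pow_succ', hω.pow_eq_one])
  have hpal := pow_totient_mul_eval_cyclotomic_inv hμ hm (hω.ne_zero three_ne_zero)
  rw [hinv] at hpal
  calc (ω ^ m.totient * (cyclotomic m K).eval ω) ^ 2
      = (ω ^ 3) ^ m.totient * ((cyclotomic m K).eval ω * (cyclotomic m K).eval (ω ^ 2)) := by
        rw [← hpal]; ring
    _ = 1 := by
        rw [hω.pow_eq_one, one_pow, eval_cyclotomic_mul_eval_cyclotomic_sq hω hμ hm h3, one_mul]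

theorem prime_dvd_eval_one_sub_of_aeval_eq [CharZero K] {p : ℕ} (hp : p.Prime) {ζ : K}
    (hζ : IsPrimitiveRoot ζ p) {P : ℤ[X]} {e : ℤ} (h : aeval ζ P = e) :
    (p : ℤ) ∣ P.eval 1 - e := by
  have : Fact p.Prime := ⟨hp⟩
  have hdvd : cyclotomic p ℤ ∣ P - C e := by
    rw [cyclotomic_eq_minpoly hζ hp.pos]
    exact minpoly.isIntegrallyClosed_dvd (hζ.isIntegral hp.pos) (by simp [h])
  simpa [eval_one_cyclotomic_prime] using eval_dvd (x := 1) hdvd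

theorem eval_cyclotomic_three_mul_div_of_dvd (hω : IsPrimitiveRoot ω 3) (hm : m ≠ 0)
    (h3 : 3 ∣ m) :
    (cyclotomic (3 * m) K).eval ω / ω ^ ((3 * m).totient / 2) = v m := by
  have hm3 : 3 ≤ m := Nat.le_of_dvd (Nat.pos_of_ne_zero hm) h3
  obtain ⟨j, hj⟩ := Nat.totient_even (by omega : 2 < m)
  have htot : (3 * m).totient / 2 = 3 * j := by
    rw [Nat.totient_mul_of_prime_of_dvd Nat.prime_three h3]
    omega
  have hexp := congrArg (eval ω) (cyclotomic_expand_eq_cyclotomic Nat.prime_three h3 K)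
  rw [expand_eval, hω.pow_eq_one, eval_one_cyclotomic_eq_v (by omega), mul_comm] at hexp
  rw [← hexp, htot, pow_mul, hω.pow_eq_one, one_pow, div_one]

theorem eval_cyclotomic_three_mul_div_of_not_dvd [CharZero K] (hω : IsPrimitiveRoot ω 3)
    (hμ : IsPrimitiveRoot μ m) (hm : 2 ≤ m) (h3 : ¬ 3 ∣ m) :
    ∃ e : ℤ, (e = 1 ∨ e = -1) ∧ (3 : ℤ) ∣ v m - e ∧
      (cyclotomic (3 * m) K).eval ω / ω ^ ((3 * m).totient / 2) = e * v m := by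
  obtain ⟨e, he, hue⟩ :
      ∃ e : ℤ, (e = 1 ∨ e = -1) ∧ ω ^ m.totient * (cyclotomic m K).eval ω = e := by
    rcases sq_eq_one_iff.mp (pow_totient_mul_eval_cyclotomic_sq_eq_one hω hμ hm h3) with h | h
    · exact ⟨1, Or.inl rfl, by simp [h]⟩
    · exact ⟨-1, Or.inr rfl, by simp [h]⟩
  refine ⟨e, he, ?_, ?_⟩
  · have h := prime_dvd_eval_one_sub_of_aeval_eq Nat.prime_three hω
      (P := X ^ m.totient * cyclotomic m ℤ) (by simpa [aeval_def, eval₂_eq_eval_map] using hue)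
    simpa [eval_one_cyclotomic_eq_v hm] using h
  · have htot : (3 * m).totient / 2 = m.totient := by
      rw [Nat.totient_mul ((Nat.Prime.coprime_iff_not_dvd Nat.prime_three).mpr h3),
        Nat.totient_prime Nat.prime_three]
      omega
    have hexp := congrArg (eval ω) (cyclotomic_expand_eq_cyclotomic_mul Nat.prime_three h3 K)
    rw [expand_eval, hω.pow_eq_one, eval_one_cyclotomic_eq_v hm, eval_mul, mul_comm m] at hexp
    have he2 : (e : K) * e = 1 := by rcases he with rfl | rfl <;> norm_num
    rw [htot, div_eq_iff (pow_ne_zero _ (hω.ne_zero three_ne_zero))]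
    linear_combination (-e * ω ^ m.totient) * hexp - (e * (cyclotomic (3 * m) K).eval ω) * hue
      - (cyclotomic (3 * m) K).eval ω * he2

end CubeRoot

theorem w_three_mul (m : ℕ) (hm : 3 ≤ m) :
    ((v m % 3 = 1 ∨ v m = 3) →
      ((cyclotomic (3 * m) ℤ).map (Int.castRingHom ℂ)).eval (Complex.exp (2 * Real.pi * I / 3)) /
        (Complex.exp (2 * Real.pi * I / 3)) ^ (Nat.totient (3 * m) / 2) = (v m : ℂ)) ∧
    (v m % 3 = 2 →
      ((cyclotomic (3 * m) ℤ).map (Int.castRingHom ℂ)).eval (Complex.exp (2 * Real.pi * I / 3)) /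
        (Complex.exp (2 * Real.pi * I / 3)) ^ (Nat.totient (3 * m) / 2) = -(v m : ℂ)) := by
  have hω : IsPrimitiveRoot (Complex.exp (2 * Real.pi * I / 3)) 3 :=
    Complex.isPrimitiveRoot_exp 3 (by norm_num)
  rw [map_cyclotomic]
  by_cases h3 : 3 ∣ m
  · have hv := v_eq_one_or_eq_of_dvd Nat.prime_three h3
    rw [eval_cyclotomic_three_mul_div_of_dvd hω (by omega) h3]
    exact ⟨fun _ => rfl, fun h => absurd h (by omega)⟩
  · obtain ⟨e, he, hdvd, heq⟩ := eval_cyclotomic_three_mul_div_of_not_dvd hω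
      (Complex.isPrimitiveRoot_exp m (by omega)) (by omega) h3
    have hv3 : v m ≠ 3 := fun h => h3 (h ▸ v_dvd m)
    rw [heq]
    constructor
    · intro h
      obtain rfl : e = 1 := by omega
      simp
    · intro h
      obtain rfl : e = -1 := by omega
      simp
end
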